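/- arXiv:1109.1602 — 2 statements merged into one kernel-verified Lean document; each statement's English description precedes it below -/
import Mathlib

section
/- Let G be a graph on n vertices with no induced 4-cycle and no clique of size k. Then the treewidth of the complement of G is at least n - k. -/
open SimpleGraph

/-- A tree decomposition of a graph `G`. -/
structure TreeDecomp {V : Type} (G : SimpleGraph V) where
  ι : Type
  T : SimpleGraph ι
  conn : T.Connected
  acyclic : T.IsAcyclic
  bag : ι → Finset V
  cover : ∀ v : V, ∃ i, v ∈ bag i
  edge_cover : ∀ ⦃u v : V⦄, G.Adj u v → ∃ i, u ∈ bag i ∧ v ∈ bag i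
  bag_conn : ∀ v : V, (T.induce {i | v ∈ bag i}).Connected

/-- The treewidth of `G`: minimum over tree decompositions of max bag size minus one. -/
noncomputable def treewidth {V : Type} (G : SimpleGraph V) : ℕ :=
  sInf {k | ∃ D : TreeDecomp G, ∀ i, (D.bag i).card ≤ k + 1}

/-- `G` is a `k`-tree: there is a construction ordering starting from a `(k+1)`-clique,
each later vertex being adjacent exactly to a `k`-clique of earlier vertices. -/
def IsKTree {V : Type} (k : ℕ) (G : SimpleGraph V) : Prop :=
  ∃ (n : ℕ) (e : V ≃ Fin n), k + 1 ≤ n ∧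
    (∀ i j : Fin n, i < j → (j : ℕ) < k + 1 → G.Adj (e.symm i) (e.symm j)) ∧
    ∀ j : Fin n, k + 1 ≤ (j : ℕ) →
      ∃ C : Finset V, G.IsNClique k C ∧ (∀ x ∈ C, ((e x : ℕ) < (j : ℕ))) ∧
        ∀ i : Fin n, i < j → (G.Adj (e.symm i) (e.symm j) ↔ e.symm i ∈ C)

/-- `G` has four vertices inducing a 4-cycle. -/
def HasInducedC4 {V : Type} (G : SimpleGraph V) : Prop :=
  ∃ a b c d : V, a ≠ c ∧ b ≠ d ∧
    G.Adj a b ∧ G.Adj b c ∧ G.Adj c d ∧ G.Adj d a ∧ ¬ G.Adj a c ∧ ¬ G.Adj b d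

/-- Two vertex sets touch in `G`: they intersect or an edge of `G` joins them. -/
def Touch {V : Type} (G : SimpleGraph V) (A B : Set V) : Prop :=
  (A ∩ B).Nonempty ∨ ∃ a ∈ A, ∃ b ∈ B, G.Adj a b

/-- A bramble in `G`: a family of connected, pairwise touching vertex sets. -/
def IsBramble {V : Type} (G : SimpleGraph V) (𝓑 : Set (Set V)) : Prop :=
  (∀ A ∈ 𝓑, (G.induce A).Connected) ∧ ∀ A ∈ 𝓑, ∀ B ∈ 𝓑, Touch G A B

/-- `S` is a hitting set of the bramble `𝓑`. -/
def IsHittingSet {V : Type} (𝓑 : Set (Set V)) (S : Set V) : Prop :=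
  ∀ A ∈ 𝓑, (A ∩ S).Nonempty

/-- The split graph `Q_n^k`: a `k`-clique (the vertices `< k`) with `n - k` further
vertices adjacent exactly to the clique. -/
def QGraph (n k : ℕ) : SimpleGraph (Fin n) where
  Adj i j := i ≠ j ∧ ((i : ℕ) < k ∨ (j : ℕ) < k)
  symm := ⟨by intro i j h; exact ⟨h.1.symm, h.2.symm⟩⟩
  loopless := ⟨by intro i h; exact h.1 rfl⟩

/-!
In a tree decomposition of `Gᶜ`, the nodes whose bags meet an edge `uv` of `Gᶜ` form a subtree.
As `G` has no induced 4-cycle, any two edges of `Gᶜ` share a vertex or are joined by an edge of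
`Gᶜ`, so these subtrees pairwise intersect, and by the Helly property of subtrees some bag `B`
meets every edge of `Gᶜ`. The vertices outside `B` then form a clique of `G`, so `|B| > n - k`.
-/
namespace SimpleGraph

variable {ι : Type*} {T : SimpleGraph ι}

def IsPathConvex (T : SimpleGraph ι) (S : Set ι) : Prop :=
  ∀ ⦃x y : ι⦄, x ∈ S → y ∈ S → ∀ p : T.Walk x y, p.IsPath → ∀ z ∈ p.support, z ∈ S

lemma isPathConvex_univ : T.IsPathConvex Set.univ := fun _ _ _ _ _ _ _ _ => trivial

lemma IsPathConvex.inter {A B : Set ι} (hA : T.IsPathConvex A) (hB : T.IsPathConvex B) :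
    T.IsPathConvex (A ∩ B) := fun _ _ hx hy p hp z hz =>
  ⟨hA hx.1 hy.1 p hp z hz, hB hx.2 hy.2 p hp z hz⟩

lemma IsAcyclic.eq_of_isPath (hT : T.IsAcyclic) {a b : ι} {p q : T.Walk a b}
    (hp : p.IsPath) (hq : q.IsPath) : p = q :=
  congrArg Subtype.val ((hT.subsingleton_path a b).elim ⟨p, hp⟩ ⟨q, hq⟩)

lemma IsAcyclic.isPathConvex_of_preconnected (hT : T.IsAcyclic) {S : Set ι}
    (hS : (T.induce S).Preconnected) : T.IsPathConvex S := by
  classical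
  intro x y hx hy p hp z hz
  obtain ⟨w⟩ := hS ⟨x, hx⟩ ⟨y, hy⟩
  let w' : T.Walk x y := w.map (Embedding.induce S).toHom
  rw [hT.eq_of_isPath hp w'.bypass_isPath] at hz
  have hz' := Walk.support_map _ w ▸ w'.support_bypass_subset_support hz
  obtain ⟨t, -, rfl⟩ := List.mem_map.1 hz'
  exact t.2

lemma IsAcyclic.exists_mem_support_of_isPath (hT : T.IsAcyclic) {a b c : ι}
    (p : T.Walk a b) (q : T.Walk b c) (r : T.Walk a c) (hp : p.IsPath) (hq : q.IsPath)
    (hr : r.IsPath) : ∃ m ∈ p.support, m ∈ q.support ∧ m ∈ r.support := by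
  classical
  induction p with
  | nil => exact ⟨_, Walk.start_mem_support _, q.start_mem_support, r.start_mem_support⟩
  | @cons a a' b h p ih =>
    rw [Walk.cons_isPath_iff] at hp
    by_cases haq : a ∈ q.support
    · exact ⟨a, Walk.start_mem_support _, haq, r.start_mem_support⟩
    by_cases ha'r : a' ∈ r.support
    · obtain ⟨m, hmp, hmq, hmr⟩ := ih q (r.dropUntil a' ha'r) hp.1 hq (hr.dropUntil ha'r)
      exact ⟨m, by simp [hmp], hmq, r.support_dropUntil_subset_support ha'r hmr⟩
    obtain ⟨m, hmp, hmq, hmr⟩ :=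
      ih q (.cons h.symm r) hp.1 hq ((Walk.cons_isPath_iff _ _).2 ⟨hr, ha'r⟩)
    rw [Walk.support_cons, List.mem_cons] at hmr
    rcases hmr with rfl | hmr
    · -- going from `a` to `m` and then along `q` is also a path from `a` to `c`
      have hr' : (Walk.cons h (q.dropUntil m hmq)).IsPath := by
        refine (Walk.cons_isPath_iff _ _).2 ⟨hq.dropUntil hmq, fun ha => haq ?_⟩
        exact q.support_dropUntil_subset_support hmq ha
      exact absurd (hT.eq_of_isPath hr' hr ▸ by simp) ha'r
    · exact ⟨m, by simp [hmp], hmq, hmr⟩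

lemma IsTree.inter_inter_nonempty (hT : T.IsTree) {A B C : Set ι}
    (hA : T.IsPathConvex A) (hB : T.IsPathConvex B) (hC : T.IsPathConvex C)
    (hAB : (A ∩ B).Nonempty) (hAC : (A ∩ C).Nonempty) (hBC : (B ∩ C).Nonempty) :
    (A ∩ B ∩ C).Nonempty := by
  obtain ⟨a, haA, haB⟩ := hAB
  obtain ⟨b, hbA, hbC⟩ := hAC
  obtain ⟨c, hcB, hcC⟩ := hBC
  obtain ⟨p, hp⟩ := (hT.connected a b).exists_isPath
  obtain ⟨q, hq⟩ := (hT.connected b c).exists_isPath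
  obtain ⟨r, hr⟩ := (hT.connected a c).exists_isPath
  obtain ⟨m, hmp, hmq, hmr⟩ := hT.isAcyclic.exists_mem_support_of_isPath p q r hp hq hr
  exact ⟨m, ⟨hA haA hbA p hp m hmp, hB haB hcB r hr m hmr⟩, hC hbC hcC q hq m hmq⟩

lemma IsTree.exists_mem_of_forall_inter_nonempty {κ : Type*} (hT : T.IsTree) (S : κ → Set ι)
    (hS : ∀ j, T.IsPathConvex (S j)) (hpair : ∀ j j', (S j ∩ S j').Nonempty) (s : Finset κ) :
    ∀ C, T.IsPathConvex C → C.Nonempty → (∀ j ∈ s, (C ∩ S j).Nonempty) →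
      ∃ m ∈ C, ∀ j ∈ s, m ∈ S j := by
  induction s using Finset.cons_induction with
  | empty => exact fun C _ ⟨m, hm⟩ _ => ⟨m, hm, by simp⟩
  | cons j s hj ih =>
    intro C hC hCne hCS
    have hCj := hCS j (s.mem_cons_self j)
    obtain ⟨m, ⟨hmC, hmj⟩, hms⟩ := ih (C ∩ S j) (hC.inter (hS j)) hCj fun j' hj' =>
      hT.inter_inter_nonempty hC (hS j) (hS j') hCj (hCS j' (Finset.mem_cons_of_mem hj'))
        (hpair j j')
    exact ⟨m, hmC, by simpa [hmj] using hms⟩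

theorem IsTree.iInter_nonempty_of_pairwise {κ : Type*} [Finite κ] (hT : T.IsTree)
    (S : κ → Set ι) (hS : ∀ j, T.IsPathConvex (S j)) (hpair : ∀ j j', (S j ∩ S j').Nonempty) :
    (⋂ j, S j).Nonempty := by
  have := Fintype.ofFinite κ
  have := hT.connected.nonempty
  obtain ⟨m, -, hm⟩ := hT.exists_mem_of_forall_inter_nonempty S hS hpair Finset.univ Set.univ
    isPathConvex_univ Set.univ_nonempty (by simpa using fun j => (hpair j j).mono (by simp))
  exact ⟨m, Set.mem_iInter.2 fun j => hm j (Finset.mem_univ j)⟩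

end SimpleGraph

namespace TreeDecomp

variable {V : Type} {H : SimpleGraph V} (D : TreeDecomp H)

def single [Fintype V] (H : SimpleGraph V) : TreeDecomp H where
  ι := Unit
  T := ⊥
  conn := connected_bot_iff.2 ⟨inferInstance, inferInstance⟩
  acyclic := isAcyclic_bot
  bag _ := Finset.univ
  cover v := ⟨(), Finset.mem_univ v⟩
  edge_cover u v _ := ⟨(), Finset.mem_univ u, Finset.mem_univ v⟩
  bag_conn v := @Connected.of_subsingleton _ _ ⟨⟨(), Finset.mem_univ v⟩⟩ _

def nodesMeeting (A : Set V) : Set D.ι := {i | ∃ v ∈ A, v ∈ D.bag i}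

lemma isTree : D.T.IsTree := ⟨D.conn, D.acyclic⟩

lemma preconnected_induce_nodesMeeting {A : Set V} (hA : (H.induce A).Preconnected) :
    (D.T.induce (D.nodesMeeting A)).Preconnected := by
  have hbag : ∀ v (hv : v ∈ A) i j (hi : v ∈ D.bag i) (hj : v ∈ D.bag j),
      (D.T.induce (D.nodesMeeting A)).Reachable ⟨i, v, hv, hi⟩ ⟨j, v, hv, hj⟩ :=
    fun v hv i j hi hj => ((D.bag_conn v).preconnected ⟨i, hi⟩ ⟨j, hj⟩).map
      (D.T.induceHomOfLE (s := {k | v ∈ D.bag k}) (s' := D.nodesMeeting A)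
        fun _ hk => ⟨v, hv, hk⟩).toHom
  have hwalk : ∀ (u w : A) (p : (H.induce A).Walk u w) i j (hi : (u : V) ∈ D.bag i)
      (hj : (w : V) ∈ D.bag j),
      (D.T.induce (D.nodesMeeting A)).Reachable ⟨i, u, u.2, hi⟩ ⟨j, w, w.2, hj⟩ := by
    intro u w p
    induction p with
    | nil => exact hbag _ (Subtype.prop _)
    | @cons u u' w h p ih =>
      intro i j hi hj
      obtain ⟨k, hku, hku'⟩ := D.edge_cover h
      exact (hbag u u.2 i k hi hku).trans ((hbag u' u'.2 k k hku' hku').trans (ih k j hku' hj))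
  rintro ⟨i, u, hu, hi⟩ ⟨j, w, hw, hj⟩
  obtain ⟨p⟩ := hA ⟨u, hu⟩ ⟨w, hw⟩
  exact hwalk _ _ p i j hi hj

lemma nodesMeeting_inter_nonempty {A B : Set V} (hAB : Touch H A B) :
    (D.nodesMeeting A ∩ D.nodesMeeting B).Nonempty := by
  rcases hAB with ⟨v, hvA, hvB⟩ | ⟨a, ha, b, hb, hab⟩
  · obtain ⟨i, hi⟩ := D.cover v
    exact ⟨i, ⟨v, hvA, hi⟩, ⟨v, hvB, hi⟩⟩
  · obtain ⟨i, hai, hbi⟩ := D.edge_cover hab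
    exact ⟨i, ⟨a, ha, hai⟩, ⟨b, hb, hbi⟩⟩

theorem exists_isHittingSet_bag [Finite V] {𝓑 : Set (Set V)} (h𝓑 : IsBramble H 𝓑) :
    ∃ i, IsHittingSet 𝓑 (D.bag i) := by
  obtain ⟨i, hi⟩ := D.isTree.iInter_nonempty_of_pairwise (fun A : 𝓑 => D.nodesMeeting A)
    (fun A => D.acyclic.isPathConvex_of_preconnected
      (D.preconnected_induce_nodesMeeting (h𝓑.1 A A.2).preconnected))
    (fun A B => D.nodesMeeting_inter_nonempty (h𝓑.2 A A.2 B B.2))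
  refine ⟨i, fun A hA => ?_⟩
  obtain ⟨v, hvA, hvi⟩ := Set.mem_iInter.1 hi ⟨A, hA⟩
  exact ⟨v, hvA, hvi⟩

end TreeDecomp

lemma le_treewidth {V : Type} [Fintype V] {G : SimpleGraph V} {m : ℕ}
    (h : ∀ D : TreeDecomp G, ∃ i, m ≤ (D.bag i).card - 1) : m ≤ treewidth G := by
  refine le_csInf ⟨Fintype.card V, TreeDecomp.single G, fun _ => ?_⟩ ?_
  · exact (Finset.card_le_univ _).trans (Nat.le_succ _)
  · rintro w ⟨D, hD⟩
    obtain ⟨i, hi⟩ := h D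
    have := hD i
    omega

namespace SimpleGraph

variable {V : Type} {G : SimpleGraph V}

def edgePairs (G : SimpleGraph V) : Set (Set V) := {A | ∃ u v, G.Adj u v ∧ A = {u, v}}

lemma touch_compl_of_not_hasInducedC4 (h4 : ¬HasInducedC4 G) {u v x y : V}
    (huv : Gᶜ.Adj u v) (hxy : Gᶜ.Adj x y) : Touch Gᶜ {u, v} {x, y} := by
  by_contra hnt
  have hadj : ∀ a ∈ ({u, v} : Set V), ∀ b ∈ ({x, y} : Set V), G.Adj a b := by
    intro a ha b hb
    by_contra hab
    by_cases heq : a = b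
    · exact hnt (Or.inl ⟨a, ha, heq ▸ hb⟩)
    · exact hnt (Or.inr ⟨a, ha, b, hb, heq, hab⟩)
  exact h4 ⟨u, x, v, y, huv.ne, hxy.ne, hadj u (by simp) x (by simp),
    (hadj v (by simp) x (by simp)).symm, hadj v (by simp) y (by simp),
    (hadj u (by simp) y (by simp)).symm, huv.2, hxy.2⟩

lemma isBramble_edgePairs_compl (h4 : ¬HasInducedC4 G) : IsBramble Gᶜ Gᶜ.edgePairs := by
  constructor
  · rintro _ ⟨u, v, huv, rfl⟩
    exact induce_pair_connected_of_adj huv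
  · rintro _ ⟨u, v, huv, rfl⟩ _ ⟨x, y, hxy, rfl⟩
    exact touch_compl_of_not_hasInducedC4 h4 huv hxy

lemma isVertexCover_of_isHittingSet_edgePairs {S : Set V} (hS : IsHittingSet G.edgePairs S) :
    G.IsVertexCover S := by
  intro u v huv
  obtain ⟨w, hw, hwS⟩ := hS _ ⟨u, v, huv, rfl⟩
  rcases hw with rfl | rfl
  exacts [Or.inl hwS, Or.inr hwS]

lemma IsClique.card_lt_of_cliqueFree {k : ℕ} (hk : G.CliqueFree k) {s : Finset V}
    (hs : G.IsClique (s : Set V)) : s.card < k := by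
  by_contra! hks
  obtain ⟨t, hts, htk⟩ := Finset.exists_subset_card_eq hks
  exact hk t ⟨hs.subset hts, htk⟩

lemma card_lt_card_add_of_isVertexCover_compl [Fintype V] {k : ℕ} (hk : G.CliqueFree k)
    {B : Finset V} (hB : Gᶜ.IsVertexCover B) : Fintype.card V < B.card + k := by
  classical
  have hclique : G.IsClique (Bᶜ : Finset V) := by
    rw [Finset.coe_compl, ← isIndepSet_compl]
    exact isIndepSet_compl_iff_isVertexCover.2 hB
  have := hclique.card_lt_of_cliqueFree hk
  rw [Finset.card_compl] at this
  have := B.card_le_univ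
  omega

end SimpleGraph

theorem tw_compl_of_no_inducedC4_of_cliqueFree {V : Type} [Fintype V] (G : SimpleGraph V)
    (k : ℕ) (h4 : ¬ HasInducedC4 G) (hk : G.CliqueFree k) :
    Fintype.card V - k ≤ treewidth Gᶜ := by
  refine le_treewidth fun D => ?_
  obtain ⟨i, hi⟩ := D.exists_isHittingSet_bag (isBramble_edgePairs_compl h4)
  have := card_lt_card_add_of_isVertexCover_compl hk (isVertexCover_of_isHittingSet_edgePairs hi)
  exact ⟨i, by omega⟩
end

section
/- For all graphs G1 and G2 on the same vertex set, the union G1 ∪ G2 contains no clique on tw(G1) + tw(G2) + 3 vertices. -/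
open SimpleGraph

/-!
Fix optimal tree decompositions of `G1` and `G2` with trees `T1`, `T2`. A vertex `v` of a clique
`s` of `G1 ⊔ G2` occupies subtrees `R v ⊆ T1` and `S v ⊆ T2`, and any two vertices of `s` share a
bag of one of the decompositions. Subtrees of a tree have the Helly property, and two subtrees
that both meet each of two disjoint subtrees meet each other. Hence the sets `R u ∪ R w`, over
the pairs `u, w ∈ s` with `S u`, `S w` disjoint, pairwise meet, so some node `x` of `T1` lies in
all of them. The vertices of `s` whose subtree misses `x` then have pairwise meeting subtrees in
`T2`, so some node `y` of `T2` lies in all of those. Thus `s` is covered by the bags at `x` and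
`y`, which have at most `tw(G1) + tw(G2) + 2` vertices together.
-/

namespace SimpleGraph

variable {V : Type*} {G : SimpleGraph V} {s : Set V}

theorem connected_induce_iff_exists_walk :
    (G.induce s).Connected ↔
      s.Nonempty ∧ ∀ x ∈ s, ∀ y ∈ s, ∃ w : G.Walk x y, ∀ z ∈ w.support, z ∈ s := by
  refine ⟨fun h => ⟨?_, fun x hx y hy => ?_⟩, fun ⟨⟨a, ha⟩, h⟩ => ?_⟩
  · obtain ⟨⟨a, ha⟩⟩ := h.nonempty
    exact ⟨a, ha⟩
  · obtain ⟨w⟩ := h.preconnected ⟨x, hx⟩ ⟨y, hy⟩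
    have hw : ∀ z ∈ (w.map (Embedding.induce s).toHom).support, z ∈ s := by
      intro z hz
      rw [Walk.support_map] at hz
      obtain ⟨z', -, rfl⟩ := List.mem_map.mp hz
      exact z'.2
    exact ⟨_, hw⟩
  · have : Nonempty s := ⟨⟨a, ha⟩⟩
    refine ⟨fun u v => ?_⟩
    obtain ⟨w, hw⟩ := h u u.2 v v.2
    exact ⟨w.induce s hw⟩

theorem IsAcyclic.connected_induce_inter (hG : G.IsAcyclic) {t : Set V}
    (hs : (G.induce s).Connected) (ht : (G.induce t).Connected) (hst : (s ∩ t).Nonempty) :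
    (G.induce (s ∩ t)).Connected := by
  classical
  rw [connected_induce_iff_exists_walk] at hs ht ⊢
  refine ⟨hst, fun x hx y hy => ?_⟩
  obtain ⟨ws, hws⟩ := hs.2 x hx.1 y hy.1
  obtain ⟨wt, hwt⟩ := ht.2 x hx.2 y hy.2
  -- both walks shorten to the unique path from `x` to `y`
  have hpath : ws.toPath = wt.toPath := (hG.subsingleton_path x y).elim _ _
  refine ⟨ws.toPath, fun z hz => ⟨hws z (ws.support_toPath_subset_support hz), ?_⟩⟩
  rw [hpath] at hz
  exact hwt z (wt.support_toPath_subset_support hz)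

theorem IsTree.exists_mem_forall_mem_of_disjoint (hG : G.IsTree) {s t : Set V}
    (hs : (G.induce s).Connected) (ht : (G.induce t).Connected) (hst : Disjoint s t) :
    ∃ x ∈ s, ∀ u : Set V, (G.induce u).Connected → (u ∩ s).Nonempty → (u ∩ t).Nonempty →
      x ∈ u := by
  classical
  obtain ⟨a, ha⟩ := (connected_induce_iff_exists_walk.mp hs).1
  obtain ⟨b, hb⟩ := (connected_induce_iff_exists_walk.mp ht).1
  let p : G.Walk a b := (hG.connected a b).some.toPath
  obtain ⟨d, hd, hds, hdt⟩ := p.exists_boundary_dart s ha (hst.notMem_of_mem_right hb)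
  refine ⟨d.fst, hds, fun u hu ⟨c, hcu, hcs⟩ ⟨c', hcu', hct⟩ => ?_⟩
  obtain ⟨ws, hws⟩ := (connected_induce_iff_exists_walk.mp hs).2 a ha c hcs
  obtain ⟨wu, hwu⟩ := (connected_induce_iff_exists_walk.mp hu).2 c hcu c' hcu'
  obtain ⟨wt, hwt⟩ := (connected_induce_iff_exists_walk.mp ht).2 c' hct b hb
  let w := ws.append (wu.append wt)
  -- `p` is the path `w` shortens to, so the boundary edge of `p` is an edge of `w`
  have hpath : (w.toPath : G.Walk a b) = p :=
    congrArg Subtype.val ((hG.isAcyclic.subsingleton_path a b).elim _ _)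
  have hdw : s(d.fst, d.snd) ∈ w.edges :=
    w.edges_toPath_subset_edges (hpath ▸ List.mem_map_of_mem hd)
  simp only [w, Walk.edges_append, List.mem_append] at hdw
  rcases hdw with hdw | hdw | hdw
  · exact absurd (hws _ (ws.snd_mem_support_of_mem_edges hdw)) hdt
  · exact hwu _ (wu.fst_mem_support_of_mem_edges hdw)
  · exact absurd (hwt _ (wt.fst_mem_support_of_mem_edges hdw)) (hst.notMem_of_mem_left hds)

theorem IsTree.inter_nonempty_of_disjoint (hG : G.IsTree) {s t u u' : Set V}
    (hs : (G.induce s).Connected) (ht : (G.induce t).Connected) (hst : Disjoint s t)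
    (hu : (G.induce u).Connected) (hus : (u ∩ s).Nonempty) (hut : (u ∩ t).Nonempty)
    (hu' : (G.induce u').Connected) (hu's : (u' ∩ s).Nonempty) (hu't : (u' ∩ t).Nonempty) :
    (u ∩ u').Nonempty := by
  obtain ⟨x, -, hx⟩ := hG.exists_mem_forall_mem_of_disjoint hs ht hst
  exact ⟨x, hx u hu hus hut, hx u' hu' hu's hu't⟩

theorem IsTree.inter_inter_nonempty_s13 (hG : G.IsTree) {s t u : Set V}
    (hs : (G.induce s).Connected) (ht : (G.induce t).Connected) (hu : (G.induce u).Connected)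
    (hst : (s ∩ t).Nonempty) (hsu : (s ∩ u).Nonempty) (htu : (t ∩ u).Nonempty) :
    (s ∩ t ∩ u).Nonempty := by
  by_contra hempty
  rw [← Set.not_disjoint_iff_nonempty_inter, not_not] at hempty
  obtain ⟨x, hxu, hx⟩ := hG.exists_mem_forall_mem_of_disjoint hu
    (hG.isAcyclic.connected_induce_inter hs ht hst) hempty.symm
  obtain ⟨y, hys, hyt⟩ := hst
  exact Set.disjoint_left.mp hempty
    ⟨hx s hs hsu ⟨y, hys, hys, hyt⟩, hx t ht htu ⟨y, hyt, hys, hyt⟩⟩ hxu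

theorem IsTree.helly (hG : G.IsTree) {ι : Type*} (t : Finset ι) (f : ι → Set V)
    (hf : ∀ i ∈ t, (G.induce (f i)).Connected)
    (hft : ∀ i ∈ t, ∀ j ∈ t, (f i ∩ f j).Nonempty) :
    ∃ x, ∀ i ∈ t, x ∈ f i := by
  rcases t.eq_empty_or_nonempty with rfl | ht
  · obtain ⟨x⟩ := hG.connected.nonempty
    exact ⟨x, by simp⟩
  induction ht using Finset.Nonempty.cons_induction generalizing f with
  | singleton i =>
    obtain ⟨x, hx, -⟩ := hft i (by simp) i (by simp)
    exact ⟨x, by simpa using hx⟩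
  | cons i t hit ht ih =>
    simp only [Finset.mem_cons, forall_eq_or_imp] at hf hft
    -- intersect every other member with `f i`; pairwise meeting is preserved by 3-Helly
    obtain ⟨x, hx⟩ := ih (fun j => f j ∩ f i)
      (fun j hj => hG.isAcyclic.connected_induce_inter (hf.2 j hj) hf.1
        (Set.inter_comm _ _ ▸ (hft.2 j hj).1))
      (fun j hj k hk => by
        obtain ⟨x, ⟨hxj, hxk⟩, hxi⟩ := hG.inter_inter_nonempty_s13 (hf.2 j hj) (hf.2 k hk) hf.1
          ((hft.2 j hj).2 k hk) (Set.inter_comm _ _ ▸ (hft.2 j hj).1)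
          (Set.inter_comm _ _ ▸ (hft.2 k hk).1)
        exact ⟨x, ⟨hxj, hxi⟩, hxk, hxi⟩)
    obtain ⟨j, hj⟩ := ht
    refine ⟨x, ?_⟩
    simp only [Finset.mem_cons, forall_eq_or_imp]
    exact ⟨(hx j hj).2, fun k hk => (hx k hk).1⟩

end SimpleGraph

section TwoTrees

open SimpleGraph

variable {V ι κ : Type*} {T : SimpleGraph ι} {T' : SimpleGraph κ} {s : Finset V}
  {f : V → Set ι} {g : V → Set κ}

theorem union_inter_union_nonempty_of_disjoint (hT' : T'.IsTree)
    (hg : ∀ v ∈ s, (T'.induce (g v)).Connected)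
    (hfg : ∀ u ∈ s, ∀ w ∈ s, (f u ∩ f w).Nonempty ∨ (g u ∩ g w).Nonempty)
    {u u' w w' : V} (hu : u ∈ s) (hu' : u' ∈ s) (hw : w ∈ s) (hw' : w' ∈ s)
    (hgu : Disjoint (g u) (g u')) (hgw : Disjoint (g w) (g w')) :
    ((f u ∪ f u') ∩ (f w ∪ f w')).Nonempty := by
  by_contra h
  have hcross : ∀ a ∈ s, ∀ b ∈ s, f a ⊆ f u ∪ f u' → f b ⊆ f w ∪ f w' →
      (g b ∩ g a).Nonempty := fun a ha b hb hfa hfb =>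
    (hfg b hb a ha).resolve_left fun ⟨x, hxb, hxa⟩ => h ⟨x, hfa hxa, hfb hxb⟩
  refine Set.not_disjoint_iff_nonempty_inter.mpr ?_ hgw
  exact hT'.inter_nonempty_of_disjoint (hg u hu) (hg u' hu') hgu
    (hg w hw) (hcross u hu w hw Set.subset_union_left Set.subset_union_left)
      (hcross u' hu' w hw Set.subset_union_right Set.subset_union_left)
    (hg w' hw') (hcross u hu w' hw' Set.subset_union_left Set.subset_union_right)
      (hcross u' hu' w' hw' Set.subset_union_right Set.subset_union_right)

theorem exists_mem_or_mem_of_inter_nonempty_or (hT : T.IsTree) (hT' : T'.IsTree)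
    (hf : ∀ v ∈ s, (T.induce (f v)).Connected) (hg : ∀ v ∈ s, (T'.induce (g v)).Connected)
    (hfg : ∀ u ∈ s, ∀ w ∈ s, (f u ∩ f w).Nonempty ∨ (g u ∩ g w).Nonempty) :
    ∃ x y, ∀ v ∈ s, x ∈ f v ∨ y ∈ g v := by
  classical
  let Q := (s ×ˢ s).filter fun p => Disjoint (g p.1) (g p.2)
  have hQ : ∀ p ∈ Q, p.1 ∈ s ∧ p.2 ∈ s ∧ Disjoint (g p.1) (g p.2) := fun p hp => by
    simpa [Q, and_assoc] using hp
  have hfQ : ∀ p ∈ Q, (f p.1 ∩ f p.2).Nonempty := fun p hp =>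
    (hfg _ (hQ p hp).1 _ (hQ p hp).2.1).resolve_right
      (Set.not_disjoint_iff_nonempty_inter.not_right.mp (hQ p hp).2.2)
  obtain ⟨x, hx⟩ := hT.helly Q (fun p => f p.1 ∪ f p.2)
    (fun p hp => induce_union_connected (hf _ (hQ p hp).1).preconnected
      (hf _ (hQ p hp).2.1).preconnected (hfQ p hp))
    (fun p hp q hq => union_inter_union_nonempty_of_disjoint hT' hg hfg
      (hQ p hp).1 (hQ p hp).2.1 (hQ q hq).1 (hQ q hq).2.1 (hQ p hp).2.2 (hQ q hq).2.2)
  -- the vertices missed by `x` have pairwise meeting `g`-sets, as disjoint pairs lie in `Q`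
  obtain ⟨y, hy⟩ := hT'.helly (s.filter (x ∉ f ·)) g
    (fun v hv => hg v (Finset.mem_filter.mp hv).1)
    (fun u hu w hw => by
      rw [Finset.mem_filter] at hu hw
      by_contra hgu
      have huw : (u, w) ∈ Q := by
        simpa [Q, hu.1, hw.1] using Set.not_disjoint_iff_nonempty_inter.not_right.mpr hgu
      exact (hx _ huw).elim hu.2 hw.2)
  refine ⟨x, y, fun v hv => ?_⟩
  by_cases hxv : x ∈ f v
  · exact Or.inl hxv
  · exact Or.inr (hy v (Finset.mem_filter.mpr ⟨hv, hxv⟩))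

end TwoTrees

def TreeDecomp.univ {V : Type} [Fintype V] (G : SimpleGraph V) : TreeDecomp G where
  ι := Unit
  T := ⊥
  conn := (connected_iff _).mpr ⟨.of_subsingleton, inferInstance⟩
  acyclic := isAcyclic_bot
  bag _ := Finset.univ
  cover v := ⟨(), Finset.mem_univ v⟩
  edge_cover u v _ := ⟨(), Finset.mem_univ u, Finset.mem_univ v⟩
  bag_conn v := (connected_iff _).mpr ⟨.of_subsingleton, ⟨⟨(), Finset.mem_univ v⟩⟩⟩

theorem exists_treeDecomp_card_bag_le_treewidth {V : Type} [Fintype V] (G : SimpleGraph V) :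
    ∃ D : TreeDecomp G, ∀ i, (D.bag i).card ≤ treewidth G + 1 :=
  Nat.sInf_mem (s := {k | ∃ D : TreeDecomp G, ∀ i, (D.bag i).card ≤ k + 1})
    ⟨Fintype.card V, TreeDecomp.univ G, fun _ => (Finset.card_le_univ _).trans (Nat.le_succ _)⟩

theorem union_cliqueFree {V : Type} [Fintype V] (G1 G2 : SimpleGraph V) :
    (G1 ⊔ G2).CliqueFree (treewidth G1 + treewidth G2 + 3) := by
  classical
  intro s hs
  obtain ⟨D1, hD1⟩ := exists_treeDecomp_card_bag_le_treewidth G1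
  obtain ⟨D2, hD2⟩ := exists_treeDecomp_card_bag_le_treewidth G2
  have hmeet : ∀ u ∈ s, ∀ w ∈ s, ({i | u ∈ D1.bag i} ∩ {i | w ∈ D1.bag i}).Nonempty ∨
      ({i | u ∈ D2.bag i} ∩ {i | w ∈ D2.bag i}).Nonempty := by
    intro u hu w hw
    rcases eq_or_ne u w with rfl | huw
    · obtain ⟨i, hi⟩ := D1.cover u
      exact Or.inl ⟨i, hi, hi⟩
    rcases hs.isClique hu hw huw with h | h
    · exact Or.inl (D1.edge_cover h)
    · exact Or.inr (D2.edge_cover h)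
  obtain ⟨x, y, hxy⟩ := exists_mem_or_mem_of_inter_nonempty_or ⟨D1.conn, D1.acyclic⟩
    ⟨D2.conn, D2.acyclic⟩ (fun v _ => D1.bag_conn v) (fun v _ => D2.bag_conn v) hmeet
  have hcard : s.card ≤ treewidth G1 + 1 + (treewidth G2 + 1) :=
    calc s.card ≤ (D1.bag x ∪ D2.bag y).card :=
          Finset.card_le_card fun v hv => Finset.mem_union.mpr (hxy v hv)
      _ ≤ (D1.bag x).card + (D2.bag y).card := Finset.card_union_le _ _
      _ ≤ treewidth G1 + 1 + (treewidth G2 + 1) := add_le_add (hD1 x) (hD2 y)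
  rw [hs.card_eq] at hcard
  omega
end
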